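/- arXiv:2206.06877 — 2 statements merged into one kernel-verified Lean document; each statement's English description precedes it below -/
import Mathlib

section
/- Let G be the graph obtained from K7 by deleting two nonadjacent edges, and let G' be obtained from G by a Δ-Y exchange on a triangle none of whose vertices is incident to a deleted edge. Then G' does not contain K_{4,4} minus an edge as a minor. -/
open SimpleGraph

/-- `H` is a minor of `G`: branch-set formulation. -/
def IsMinor {W V : Type*} (H : SimpleGraph W) (G : SimpleGraph V) : Prop :=
  ∃ ρ : W → Set V,
    (∀ w, (ρ w).Nonempty) ∧
    (∀ w, (G.induce (ρ w)).Connected) ∧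
    (Pairwise fun w w' => Disjoint (ρ w) (ρ w')) ∧
    ∀ ⦃w w'⦄, H.Adj w w' → ∃ a ∈ ρ w, ∃ b ∈ ρ w', G.Adj a b

/-- Δ-Y exchange on the triangle `v₁ v₂ v₃`. -/
def deltaY {V : Type*} (G : SimpleGraph V) (v₁ v₂ v₃ : V) : SimpleGraph (V ⊕ Unit) where
  Adj x y :=
    match x, y with
    | .inl a, .inl b => G.Adj a b ∧ s(a, b) ∉ ({s(v₁, v₂), s(v₂, v₃), s(v₁, v₃)} : Set (Sym2 V))
    | .inl a, .inr _ => a = v₁ ∨ a = v₂ ∨ a = v₃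
    | .inr _, .inl a => a = v₁ ∨ a = v₂ ∨ a = v₃
    | .inr _, .inr _ => False
  symm := by
    constructor
    rintro (a | a) (b | b) h
    · exact ⟨h.1.symm, by rw [show s(b, a) = s(a, b) from Sym2.eq_swap]; exact h.2⟩
    · exact h
    · exact h
    · exact h
  loopless := by
    constructor
    rintro (a | a) h
    · exact G.loopless.irrefl a h.1
    · exact h

/-- `K_{4,4}` minus an edge (the edge between `inl 0` and `inr 0`). -/
def K44e : SimpleGraph (Fin 4 ⊕ Fin 4) where
  Adj x y :=
    match x, y with
    | .inl i, .inr j => ¬(i = 0 ∧ j = 0)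
    | .inr j, .inl i => ¬(i = 0 ∧ j = 0)
    | _, _ => False
  symm := by constructor; rintro (i | i) (j | j) h <;> exact h
  loopless := by constructor; rintro (i | i) h <;> exact h

/-!
`K_{4,4} - e` and the Δ-Y graph both have eight vertices, so a minor would be a spanning subgraph,
i.e. a bijective copy. The new vertex has degree 3, so it is the image of an endpoint of the missing
edge, say `inl 0`, whose three neighbours then fill the old triangle `{a, b, c}`. The other endpoint
`inr 0` lands on a vertex `u₀` off the triangle, hence on an endpoint of a deleted edge; the other end
`u'` of that edge is off the triangle too, so it is the image of some `inl m` with `m ≠ 0`, which is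
adjacent to `inr 0` although `u₀ u'` is not an edge.
-/

theorem IsMinor.exists_bijective_copy {W V : Type*} [Finite V] {H : SimpleGraph W}
    {G : SimpleGraph V} (h : IsMinor H G) (hcard : Nat.card V ≤ Nat.card W) :
    ∃ f : Copy H G, Function.Bijective f := by
  obtain ⟨ρ, hne, -, hdisj, hadj⟩ := h
  choose f hf using hne
  have hinj : Function.Injective f := fun w w' hww' =>
    by_contra fun hne => Set.disjoint_left.mp (hdisj hne) (hf w) (hww' ▸ hf w')
  have hbij := hinj.bijective_of_nat_card_le hcard
  have hρ : ∀ w, ρ w ⊆ {f w} := by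
    intro w v hv
    obtain ⟨w', rfl⟩ := hbij.2 v
    by_contra hne
    exact Set.disjoint_left.mp (hdisj (ne_of_apply_ne f hne)) (hf w') hv
  refine ⟨⟨⟨f, fun {w w'} hww' => ?_⟩, hinj⟩, hbij⟩
  obtain ⟨p, hp, q, hq, hpq⟩ := hadj hww'
  rwa [hρ w hp, hρ w' hq] at hpq

namespace SimpleGraph

namespace Copy

variable {α β : Type*} {A : SimpleGraph α} {B : SimpleGraph β} [Finite β]

theorem ncard_neighborSet_le (f : Copy A B) (a : α) :
    (A.neighborSet a).ncard ≤ (B.neighborSet (f a)).ncard :=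
  Set.ncard_le_ncard_of_injOn f (fun _ h => f.toHom.apply_mem_neighborSet h) f.injective.injOn

theorem image_neighborSet_eq (f : Copy A B) {a : α}
    (h : (B.neighborSet (f a)).ncard ≤ (A.neighborSet a).ncard) :
    f '' A.neighborSet a = B.neighborSet (f a) :=
  Set.eq_of_subset_of_ncard_le (Set.image_subset_iff.2 fun _ h => f.toHom.apply_mem_neighborSet h)
    (by rwa [Set.ncard_image_of_injective (f := f) _ f.injective])

end Copy

theorem exists_not_adj_deleteEdges {V : Type*} (G : SimpleGraph V) {M : Set (Sym2 V)} {e : Sym2 V}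
    (he : e ∈ M) (hd : ¬e.IsDiag) {u : V} (hu : u ∈ e) :
    ∃ u' ∈ e, u' ≠ u ∧ ¬(G.deleteEdges M).Adj u u' :=
  ⟨Sym2.Mem.other hu, Sym2.other_mem hu, Sym2.other_ne hd hu,
    fun h => (deleteEdges_adj.1 h).2 (by rwa [Sym2.other_spec hu])⟩

end SimpleGraph

section deltaY

variable {V : Type*} (G : SimpleGraph V) (v₁ v₂ v₃ : V)

theorem deltaY_neighborSet_inr (u : Unit) :
    (deltaY G v₁ v₂ v₃).neighborSet (.inr u) = {.inl v₁, .inl v₂, .inl v₃} := by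
  ext (x | x) <;> simp [deltaY]

theorem ncard_neighborSet_deltaY_inr_le (u : Unit) :
    ((deltaY G v₁ v₂ v₃).neighborSet (.inr u)).ncard ≤ 3 := by
  rw [deltaY_neighborSet_inr]
  exact (Set.ncard_insert_le _ _).trans (by grw [Set.ncard_insert_le, Set.ncard_singleton])

end deltaY

namespace K44e

instance : DecidableRel K44e.Adj := fun x y =>
  match x, y with
  | .inl i, .inr j => inferInstanceAs (Decidable ¬(i = 0 ∧ j = 0))
  | .inr j, .inl i => inferInstanceAs (Decidable ¬(i = 0 ∧ j = 0))
  | .inl _, .inl _ => isFalse id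
  | .inr _, .inr _ => isFalse id

theorem ncard_neighborSet_inl_zero : (K44e.neighborSet (.inl 0)).ncard = 3 := by
  rw [Set.ncard_eq_toFinset_card']
  decide

theorem eq_inl_zero_or_eq_inr_zero_of_ncard_neighborSet_le {w : Fin 4 ⊕ Fin 4}
    (h : (K44e.neighborSet w).ncard ≤ 3) : w = .inl 0 ∨ w = .inr 0 := by
  rw [Set.ncard_eq_toFinset_card'] at h
  revert w
  decide

theorem adj_inr_zero_of_not_adj_inl_zero {v : Fin 4 ⊕ Fin 4} (hv : v ≠ .inl 0)
    (hadj : ¬K44e.Adj (.inl 0) v) (hv' : v ≠ .inr 0) : K44e.Adj (.inr 0) v := by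
  revert v
  decide

def swapIso : K44e ≃g K44e where
  toEquiv := Equiv.sumComm _ _
  map_rel_iff' := by rintro (i | i) (j | j) <;> simp [K44e, and_comm]

end K44e

section K44eMinor

variable {V : Type*} [Finite V] {G : SimpleGraph V} {a b c : V}

theorem copy_K44e_deltaY_apply_inl_zero_ne
    (hnon : ∀ u ∉ ({a, b, c} : Set V), ∃ u' ∉ ({a, b, c} : Set V), u' ≠ u ∧ ¬G.Adj u u')
    (f : Copy K44e (deltaY G a b c)) (hf : Function.Surjective f) :
    f (.inl 0) ≠ .inr () := by
  intro h0
  have hN : f '' K44e.neighborSet (.inl 0) = {.inl a, .inl b, .inl c} := by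
    rw [← deltaY_neighborSet_inr G a b c (), ← h0]
    refine f.image_neighborSet_eq ?_
    rw [h0, K44e.ncard_neighborSet_inl_zero]
    exact ncard_neighborSet_deltaY_inr_le G a b c ()
  have hmem (v : Fin 4 ⊕ Fin 4) : f v ∈ ({.inl a, .inl b, .inl c} : Set (V ⊕ Unit)) ↔ K44e.Adj (.inl 0) v :=
    hN ▸ f.injective.mem_set_image
  obtain ⟨u₀, hf0⟩ : ∃ u₀, f (.inr 0) = .inl u₀ := by
    rcases hfv : f (.inr 0) with u₀ | ⟨⟩
    · exact ⟨u₀, rfl⟩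
    · exact absurd (f.injective (hfv.trans h0.symm)) (by simp)
  have hu₀ : u₀ ∉ ({a, b, c} : Set V) := fun hu =>
    (hmem (.inr 0)).1 (by simpa [hf0] using hu) ⟨rfl, rfl⟩
  obtain ⟨u', hu', hne, hnadj⟩ := hnon u₀ hu₀
  obtain ⟨v, hv⟩ := hf (.inl u')
  have hv0 : v ≠ .inl 0 := by rintro rfl; simp [h0] at hv
  have hvr : v ≠ .inr 0 := by rintro rfl; simp [hf0] at hv; exact hne hv.symm
  have hvN : ¬K44e.Adj (.inl 0) v := fun hadj => hu' (by simpa [hv] using (hmem v).2 hadj)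
  have := f.toHom.map_adj (K44e.adj_inr_zero_of_not_adj_inl_zero hv0 hvN hvr)
  simp only [Copy.toHom_apply, hf0, hv] at this
  exact hnadj this.1

theorem not_isMinor_K44e_deltaY (hV : Nat.card V ≤ 7)
    (hnon : ∀ u ∉ ({a, b, c} : Set V), ∃ u' ∉ ({a, b, c} : Set V), u' ≠ u ∧ ¬G.Adj u u') :
    ¬IsMinor K44e (deltaY G a b c) := by
  intro hminor
  obtain ⟨f, hf⟩ := hminor.exists_bijective_copy (by simp; omega)
  obtain ⟨w, hw⟩ := hf.2 (.inr ())
  have hw3 : (K44e.neighborSet w).ncard ≤ 3 :=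
    (f.ncard_neighborSet_le w).trans (hw ▸ ncard_neighborSet_deltaY_inr_le G a b c ())
  rcases K44e.eq_inl_zero_or_eq_inr_zero_of_ncard_neighborSet_le hw3 with rfl | rfl
  · exact copy_K44e_deltaY_apply_inl_zero_ne hnon f hf.2 hw
  · exact copy_K44e_deltaY_apply_inl_zero_ne hnon (f.comp K44e.swapIso.toCopy)
      (hf.2.comp K44e.swapIso.surjective) hw

end K44eMinor

/-- `K₇` minus two nonadjacent edges, Δ-Y exchange on a triangle none of
whose vertices is incident to a deleted edge: no `K_{4,4} - e` minor. -/
theorem K7_minus_two_nonadjacent_deltaY_no_K44e_minor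
    (x₁ x₂ x₃ x₄ : Fin 7)
    (hdist : x₁ ≠ x₂ ∧ x₁ ≠ x₃ ∧ x₁ ≠ x₄ ∧ x₂ ≠ x₃ ∧ x₂ ≠ x₄ ∧ x₃ ≠ x₄)
    (G : SimpleGraph (Fin 7))
    (hG : G = (⊤ : SimpleGraph (Fin 7)).deleteEdges {s(x₁, x₂), s(x₃, x₄)})
    (a b c : Fin 7)
    (hab : G.Adj a b) (hbc : G.Adj b c) (hac : G.Adj a c)
    (hfree : ∀ w, w ∈ ({a, b, c} : Set (Fin 7)) → w ∉ ({x₁, x₂, x₃, x₄} : Set (Fin 7))) :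
    ¬ IsMinor K44e (deltaY G a b c) := by
  obtain ⟨hx12, hx13, hx14, hx23, hx24, hx34⟩ := hdist
  have hcover (u : Fin 7) (hu : u ∉ ({a, b, c} : Set (Fin 7))) :
      u ∈ ({x₁, x₂, x₃, x₄} : Set (Fin 7)) := by
    by_contra hux
    have hnodup : [u, a, b, c, x₁, x₂, x₃, x₄].Nodup := by
      have := hfree a; have := hfree b; have := hfree c
      simp_all [hab.ne, hbc.ne, hac.ne]
    simpa using hnodup.length_le_card
  refine not_isMinor_K44e_deltaY (by simp) fun u hu => ?_
  obtain ⟨e, he, hue⟩ : ∃ e ∈ ({s(x₁, x₂), s(x₃, x₄)} : Set (Sym2 (Fin 7))), u ∈ e := by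
    simpa [or_assoc] using hcover u hu
  have hdiag : ¬e.IsDiag := by rcases he with rfl | rfl <;> simpa
  obtain ⟨u', hu'e, hne, hnadj⟩ := exists_not_adj_deleteEdges ⊤ he hdiag hue
  refine ⟨u', fun hu' => hfree u' hu' ?_, hne, hG ▸ hnadj⟩
  rcases he with rfl | rfl <;> simp at hu'e ⊢ <;> tauto
end

section
/- Let G be the graph obtained from K7 by deleting two adjacent edges, say v1v6 and v1v7, and let G' be obtained by a Δ-Y exchange on the triangle {v2, v6, v7}. Then G' contains K_{4,4} minus an edge as a minor, witnessed by the bipartition {v1, v2, v6, v7} and {v3, v4, v5, v8}, where v8 is the new vertex of the exchange. -/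
open SimpleGraph

/-- Vertices `0,…,6` stand for `v₁,…,v₇`.  `G` is `K₇` minus the adjacent edges
`v₁v₆`, `v₁v₇`; `G'` is obtained by the Δ-Y exchange on the triangle `{v₂, v₆, v₇}`,
with `Sum.inr ()` being the new vertex `v₈`. -/
def G₃ : SimpleGraph (Fin 7) := (⊤ : SimpleGraph (Fin 7)).deleteEdges {s(0, 5), s(0, 6)}

def G₃' : SimpleGraph (Fin 7 ⊕ Unit) := deltaY G₃ 1 5 6

/-- Branch sets witnessing the `K_{4,4}-e` minor, with bipartition
`{v₁, v₂, v₆, v₇}` and `{v₃, v₄, v₅, v₈}` (the missing edge of `K44e` corresponding to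
the nonadjacent pair `v₁, v₈`). -/
def ρ₃ : Fin 4 ⊕ Fin 4 → Set (Fin 7 ⊕ Unit) :=
  Sum.elim
    ![{Sum.inl 0}, {Sum.inl 1}, {Sum.inl 5}, {Sum.inl 6}]
    ![{Sum.inr ()}, {Sum.inl 2}, {Sum.inl 3}, {Sum.inl 4}]

/-! The branch sets are single vertices, so the minor is a subgraph: the vertices `v₃, v₄, v₅`
lie outside the triangle and the deleted edges, so they keep all their edges to `v₁, v₂, v₆, v₇`,
and the new vertex `v₈` is joined to `v₂, v₆, v₇`; only the pair `v₁ v₈` is missing. -/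

section MinorModel

variable {W V : Type*}

def IsMinorModel (H : SimpleGraph W) (G : SimpleGraph V) (ρ : W → Set V) : Prop :=
  (∀ w, (ρ w).Nonempty) ∧
    (∀ w, (G.induce (ρ w)).Connected) ∧
    (Pairwise fun w w' => Disjoint (ρ w) (ρ w')) ∧
    ∀ ⦃w w'⦄, H.Adj w w' → ∃ a ∈ ρ w, ∃ b ∈ ρ w', G.Adj a b

theorem IsMinorModel.isMinor {H : SimpleGraph W} {G : SimpleGraph V} {ρ : W → Set V}
    (h : IsMinorModel H G ρ) : IsMinor H G :=
  ⟨ρ, h⟩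

theorem isMinorModel_singleton_of_injective {H : SimpleGraph W} {G : SimpleGraph V} (f : H →g G)
    (hf : Function.Injective f) : IsMinorModel H G fun w => {f w} :=
  ⟨fun _ => Set.singleton_nonempty _, fun _ => .of_subsingleton,
    fun _ _ hne => Set.disjoint_singleton.mpr (hf.ne hne),
    fun w w' h => ⟨f w, rfl, f w', rfl, f.map_adj h⟩⟩

end MinorModel

instance deltaY.instDecidableRelAdj {V : Type*} [DecidableEq V] (G : SimpleGraph V)
    [DecidableRel G.Adj] (v₁ v₂ v₃ : V) : DecidableRel (deltaY G v₁ v₂ v₃).Adj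
  | .inl a, .inl b => decidable_of_iff
      (G.Adj a b ∧ s(a, b) ∉ ({s(v₁, v₂), s(v₂, v₃), s(v₁, v₃)} : Finset (Sym2 V))) (by
        simp only [deltaY, Finset.mem_insert, Finset.mem_singleton, Set.mem_insert_iff,
          Set.mem_singleton_iff])
  | .inl a, .inr _ => inferInstanceAs (Decidable (a = v₁ ∨ a = v₂ ∨ a = v₃))
  | .inr _, .inl a => inferInstanceAs (Decidable (a = v₁ ∨ a = v₂ ∨ a = v₃))
  | .inr _, .inr _ => inferInstanceAs (Decidable False)

instance K44e.instDecidableRelAdj : DecidableRel K44e.Adj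
  | .inl i, .inr j => inferInstanceAs (Decidable ¬(i = 0 ∧ j = 0))
  | .inr j, .inl i => inferInstanceAs (Decidable ¬(i = 0 ∧ j = 0))
  | .inl _, .inl _ => inferInstanceAs (Decidable False)
  | .inr _, .inr _ => inferInstanceAs (Decidable False)

instance : DecidableRel G₃.Adj :=
  inferInstanceAs (DecidableRel ((⊤ : SimpleGraph (Fin 7)) \ fromEdgeSet {s(0, 5), s(0, 6)}).Adj)

instance : DecidableRel G₃'.Adj := deltaY.instDecidableRelAdj G₃ 1 5 6

def K44eToG₃' : K44e →g G₃' where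
  toFun := Sum.elim ![.inl 0, .inl 1, .inl 5, .inl 6] ![.inr (), .inl 2, .inl 3, .inl 4]
  map_rel' := by decide

theorem K44eToG₃'_injective : Function.Injective K44eToG₃' := by decide

theorem ρ₃_eq_singleton : ρ₃ = fun w => {K44eToG₃' w} := by
  ext1 w
  rcases w with i | i <;> fin_cases i <;> rfl

/-- `G'` contains `K_{4,4} - e` as a minor, witnessed by the bipartition
`{v₁, v₂, v₆, v₇}`, `{v₃, v₄, v₅, v₈}`. -/
theorem K7_minus_adjacent_deltaY_has_K44e_minor :
    ((∀ w, (ρ₃ w).Nonempty) ∧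
      (∀ w, (G₃'.induce (ρ₃ w)).Connected) ∧
      (Pairwise fun w w' => Disjoint (ρ₃ w) (ρ₃ w')) ∧
      ∀ ⦃w w'⦄, K44e.Adj w w' → ∃ a ∈ ρ₃ w, ∃ b ∈ ρ₃ w', G₃'.Adj a b) ∧
    IsMinor K44e G₃' := by
  have hmodel : IsMinorModel K44e G₃' ρ₃ := by
    rw [ρ₃_eq_singleton]
    exact isMinorModel_singleton_of_injective K44eToG₃' K44eToG₃'_injective
  exact ⟨hmodel, hmodel.isMinor⟩
end
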